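/- In the limit β → ∞, K_⊥(β)·log(2β)/β → 4/3, so the perpendicular slender-body drag is asymptotically 8πμb/log(2β). -/

import Mathlib

/-!
Write `L = log (β + √(β² - 1)) = arcosh β` and `t = √(β² - 1) / β`. Since `t² = 1 - 1/β²`,
multiplying numerator and denominator by `t / (β L)` turns `K_⊥(β) · log (2β) / β` into
`(8/3) · t³ · (log (2β) / L) / (3t² - 1 + t / L)`. As `β → ∞` we have `t → 1`, `L → ∞` and
`L - log (2β) = log ((1 + t) / 2) → 0`, so this tends to `(8/3) / 2 = 4/3`.
-/

open Real Filter Topology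

theorem tendsto_sqrt_sq_sub_one_div_atTop :
    Tendsto (fun x : ℝ => √(x ^ 2 - 1) / x) atTop (𝓝 1) := by
  have h : Tendsto (fun x : ℝ => √(1 - (x ^ 2)⁻¹)) atTop (𝓝 1) := by
    simpa using ((tendsto_inv_atTop_zero.comp (tendsto_pow_atTop two_ne_zero)).const_sub
      (1 : ℝ)).sqrt
  refine h.congr' ?_
  filter_upwards [eventually_gt_atTop 0] with x hx
  rw [show 1 - (x ^ 2)⁻¹ = (x ^ 2 - 1) / x ^ 2 by field_simp, sqrt_div' _ (sq_nonneg x),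
    sqrt_sq hx.le]

theorem tendsto_arcosh_atTop : Tendsto arcosh atTop atTop :=
  tendsto_log_atTop.comp <|
    tendsto_atTop_mono (fun _ => le_add_of_nonneg_right (sqrt_nonneg _)) tendsto_id

theorem tendsto_arcosh_sub_log_two_mul_atTop :
    Tendsto (fun x => arcosh x - log (2 * x)) atTop (𝓝 0) := by
  have h : Tendsto (fun x : ℝ => log ((1 + √(x ^ 2 - 1) / x) / 2)) atTop (𝓝 0) := by
    simpa using ((tendsto_sqrt_sq_sub_one_div_atTop.const_add 1).div_const 2).log (by norm_num)
  refine h.congr' ?_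
  filter_upwards [eventually_ge_atTop 1] with x hx
  rw [arcosh, ← log_div (by positivity) (by positivity)]
  congr 1
  field_simp

theorem tendsto_log_two_mul_div_arcosh_atTop :
    Tendsto (fun x => log (2 * x) / arcosh x) atTop (𝓝 1) := by
  have h := (tendsto_arcosh_sub_log_two_mul_atTop.div_atTop tendsto_arcosh_atTop).const_sub 1
  rw [sub_zero] at h
  refine h.congr' ?_
  filter_upwards [eventually_gt_atTop 1] with x hx
  have := (arcosh_pos hx).ne'
  field_simp
  ring

noncomputable def perpendicularShapeFactor (β : ℝ) : ℝ :=
  8 / 3 * (β ^ 2 - 1) / ((2 * β ^ 2 - 3) / √(β ^ 2 - 1) * arcosh β + β)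

theorem perpendicularShapeFactor_mul_log_div_eq {β : ℝ} (hβ : 1 < β) :
    perpendicularShapeFactor β * log (2 * β) / β =
      8 / 3 * ((√(β ^ 2 - 1) / β) ^ 3 * (log (2 * β) / arcosh β)) /
        (3 * (√(β ^ 2 - 1) / β) ^ 2 - 1 + √(β ^ 2 - 1) / β / arcosh β) := by
  have hs : 0 < √(β ^ 2 - 1) := sqrt_pos.mpr (by nlinarith)
  have hs2 : √(β ^ 2 - 1) ^ 2 = β ^ 2 - 1 := sq_sqrt (by nlinarith)
  have hL := arcosh_pos hβ
  have hβ0 : β ≠ 0 := by positivity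
  set s := √(β ^ 2 - 1)
  set M := log (2 * β)
  have hc : s / (β ^ 2 * arcosh β) ≠ 0 := by positivity
  have hden : 3 * (s / β) ^ 2 - 1 + s / β / arcosh β =
      ((2 * β ^ 2 - 3) / s * arcosh β + β) * (s / (β ^ 2 * arcosh β)) := by
    field_simp
    linear_combination (3 * arcosh β) * hs2
  have hnum : (s / β) ^ 3 * (M / arcosh β) = (β ^ 2 - 1) * M / β * (s / (β ^ 2 * arcosh β)) := by
    field_simp
    linear_combination M * hs2
  rw [perpendicularShapeFactor, hden, hnum, ← mul_assoc, mul_div_mul_right _ _ hc]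
  ring

theorem perpendicular_shape_factor_asymptotics :
    Filter.Tendsto
      (fun β : ℝ =>
        ((8 / 3) * (β ^ 2 - 1) /
          ((2 * β ^ 2 - 3) / Real.sqrt (β ^ 2 - 1) *
              Real.log (β + Real.sqrt (β ^ 2 - 1)) + β)) *
          Real.log (2 * β) / β)
      Filter.atTop (nhds (4 / 3)) := by
  have ht := tendsto_sqrt_sq_sub_one_div_atTop
  have hlim : Tendsto (fun β => 8 / 3 * ((√(β ^ 2 - 1) / β) ^ 3 * (log (2 * β) / arcosh β)) /
      (3 * (√(β ^ 2 - 1) / β) ^ 2 - 1 + √(β ^ 2 - 1) / β / arcosh β)) atTop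
      (𝓝 (8 / 3 * (1 ^ 3 * 1) / (3 * 1 ^ 2 - 1 + 0))) :=
    ((ht.pow 3).mul tendsto_log_two_mul_div_arcosh_atTop).const_mul _ |>.div
      (((ht.pow 2).const_mul 3).sub_const 1 |>.add (ht.div_atTop tendsto_arcosh_atTop))
      (by norm_num)
  norm_num at hlim
  refine hlim.congr' ?_
  filter_upwards [eventually_gt_atTop 1] with β hβ
  exact (perpendicularShapeFactor_mul_log_div_eq hβ).symm
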